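/- Let ν ∈ int(T) and r ∈ [R_ν], and let W̄_H^(ν,r) denote the end tensor obtained by pruning the (ν,r)'th local component, i.e. by setting the r'th row of W^(ν) and the r'th column of W^(ν_c) for every ν_c ∈ C(ν) to zero. Then ‖W_H − W̄_H^(ν,r)‖ ≤ σ^(ν,r) · ∏_{ν'∈T∖({ν}∪C(ν))} ‖W^(ν')‖, where ‖·‖ is the Frobenius norm. -/

import Mathlib

namespace HTF

/-- Rooted tree whose leaves are labeled by elements of `Fin N`. -/
inductive MTree (N : ℕ) : Type
  | leaf : Fin N → MTree N
  | node : List (MTree N) → MTree N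

noncomputable instance {N : ℕ} : DecidableEq (MTree N) := fun _ _ => Classical.dec _

namespace MTree

variable {N : ℕ}

/-- The list of leaf labels of the tree. -/
def leafList : MTree N → List (Fin N)
  | .leaf i => [i]
  | .node ts => ts.attach.flatMap fun t => t.1.leafList
decreasing_by simp only [MTree.node.sizeOf_spec]; have := List.sizeOf_lt_of_mem t.2; omega

/-- The label of a node: set of leaf indices appearing in its subtree. -/
def label (t : MTree N) : Finset (Fin N) := t.leafList.toFinset

/-- All nodes (subtrees) of the tree. -/
def nodes : MTree N → List (MTree N)
  | .leaf i => [.leaf i]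
  | .node ts => .node ts :: ts.attach.flatMap fun t => t.1.nodes
decreasing_by simp only [MTree.node.sizeOf_spec]; have := List.sizeOf_lt_of_mem t.2; omega

/-- The children of a node. -/
def children : MTree N → List (MTree N)
  | .leaf _ => []
  | .node ts => ts

/-- Interior (non-leaf) node. -/
def IsInterior : MTree N → Prop
  | .leaf _ => False
  | .node _ => True

/-- Every non-leaf node has at least one child. -/
def Branching : MTree N → Prop
  | .leaf _ => True
  | .node ts => ts ≠ [] ∧ ∀ t ∈ ts.attach, Branching t.1
decreasing_by simp only [MTree.node.sizeOf_spec]; have := List.sizeOf_lt_of_mem t.2; omega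

/-- A valid mode tree over `[N]`: it has exactly `N` leaves, labeled `{1},...,{N}`
(each index appearing exactly once), and interior nodes have children. -/
def Valid (t : MTree N) : Prop :=
  t.leafList.Nodup ∧ (∀ i : Fin N, i ∈ t.leafList) ∧ t.Branching

/-- The parent of node `ν` in the tree (first argument), if it exists. -/
noncomputable def parentIn : MTree N → MTree N → Option (MTree N)
  | .leaf _, _ => none
  | .node ts, ν =>
      if ν ∈ ts then some (.node ts)
      else ts.attach.findSome? fun t => parentIn t.1 ν
termination_by T _ => sizeOf T
decreasing_by simp only [MTree.node.sizeOf_spec]; have := List.sizeOf_lt_of_mem t.2; omega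

end MTree

open MTree

variable {N : ℕ} (D : Fin N → ℕ)

/-- Full index set of an order-`N` tensor with mode dimensions `D`. -/
abbrev Idx : Type := ∀ n, Fin (D n)

/-- The intermediate tensors `W^(ν,r)` of a hierarchical tensor factorization with
local-component numbers `R` and weight matrices `W` (columns indexed by `ℕ`).
An order-`|label ν|` tensor is represented as a function of a full index tuple that
only depends on the coordinates in `label ν`; with this representation, the tensor
product of tensors over disjoint mode sets is pointwise multiplication and the mode
permutation `π_ν` is the identity. -/
noncomputable def interm (R : MTree N → ℕ) (W : ∀ ν : MTree N, Fin (R ν) → ℕ → ℝ) :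
    MTree N → ℕ → Idx D → ℝ
  | .leaf i, r => fun x =>
      if h : R (.leaf i) = D i then W (.leaf i) (Fin.cast h.symm (x i)) r else 0
  | .node ts, r => fun x =>
      ∑ r' : Fin (R (.node ts)),
        W (.node ts) r' r * (ts.attach.map fun t => interm R W t.1 (r' : ℕ) x).prod
decreasing_by simp only [MTree.node.sizeOf_spec]; have := List.sizeOf_lt_of_mem t.2; omega

/-- The end tensor `W_H` of the hierarchical tensor factorization with mode tree `T`. -/
noncomputable def endT (R : MTree N → ℕ) (W : ∀ ν : MTree N, Fin (R ν) → ℕ → ℝ)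
    (T : MTree N) : Idx D → ℝ :=
  interm D R W T 0

/-- Entry `(i, j)` of the weight matrix at node `ν` (zero outside the row range). -/
noncomputable def went (R : MTree N → ℕ) (W : ∀ ν : MTree N, Fin (R ν) → ℕ → ℝ)
    (ν : MTree N) (i j : ℕ) : ℝ :=
  if h : i < R ν then W ν ⟨i, h⟩ j else 0

/-- `R_{Pa(ν)}` : the number of local components at the parent of `ν` in `T`
(`1` if `ν` is the root). -/
noncomputable def Rpar (R : MTree N → ℕ) (T ν : MTree N) : ℕ :=
  if ν = T then 1 else ((parentIn T ν).map R).getD 0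

/-- Replace the weight matrix at node `μ` by `A`, keeping all other weight matrices. -/
noncomputable def replace (R : MTree N → ℕ) (W : ∀ ν : MTree N, Fin (R ν) → ℕ → ℝ)
    (μ : MTree N) (A : Fin (R μ) → ℕ → ℝ) : ∀ ν : MTree N, Fin (R ν) → ℕ → ℝ :=
  fun ν => if h : ν = μ then fun i j => A (Fin.cast (congrArg R h) i) j else W ν

/-- Frobenius (Euclidean) inner product of order-`N` tensors. -/
noncomputable def tinner (A B : Idx D → ℝ) : ℝ := ∑ x, A x * B x

/-- Frobenius norm of an order-`N` tensor. -/
noncomputable def tnorm (A : Idx D → ℝ) : ℝ := Real.sqrt (∑ x, (A x) ^ 2)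

/-- Frobenius norm of an order-`|s|` tensor represented as a function of a full index
tuple depending only on the coordinates in `s` (so that the sum over the full index
set over-counts each entry `∏_{n ∉ s} D n` times). -/
noncomputable def rnorm (s : Finset (Fin N)) (A : Idx D → ℝ) : ℝ :=
  Real.sqrt ((∑ x, (A x) ^ 2) / ∏ n ∈ sᶜ, (D n : ℝ))

/-- Squared norm of the `r`'th column of the weight matrix at node `c`. -/
noncomputable def colSq (R : MTree N → ℕ) (W : ∀ ν : MTree N, Fin (R ν) → ℕ → ℝ)
    (c : MTree N) (r : ℕ) : ℝ :=
  ∑ i : Fin (R c), (W c i r) ^ 2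

/-- Squared norm of the `r`'th row of the weight matrix at node `ν` of `T`. -/
noncomputable def rowSq (R : MTree N → ℕ) (W : ∀ ν : MTree N, Fin (R ν) → ℕ → ℝ)
    (T ν : MTree N) (r : ℕ) : ℝ :=
  ∑ j : Fin (Rpar R T ν), (went R W ν r (j : ℕ)) ^ 2

/-- `σ^(ν,r)` : the norm of the `(ν,r)`'th local component, i.e. the product of the
norms of the vectors in `LC(ν,r)` (the `r`'th row of `W^(ν)` together with the `r`'th
columns of the weight matrices of the children of `ν`). -/
noncomputable def sigmaLoc (R : MTree N → ℕ) (W : ∀ ν : MTree N, Fin (R ν) → ℕ → ℝ)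
    (T ν : MTree N) (r : ℕ) : ℝ :=
  Real.sqrt (rowSq R W T ν r) * (ν.children.map fun c => Real.sqrt (colSq R W c r)).prod

/-- `PadR_r(W^(ν)_{r,:})` : the matrix whose `r`'th row is the `r`'th row of `W^(ν)`
and whose other rows are zero. -/
noncomputable def padRow (R : MTree N → ℕ) (W : ∀ ν : MTree N, Fin (R ν) → ℕ → ℝ)
    (ν : MTree N) (r : ℕ) : Fin (R ν) → ℕ → ℝ :=
  fun i j => if (i : ℕ) = r then W ν i j else 0

/-- `PadC_r(W^(c)_{:,r})` : the matrix whose `r`'th column is the `r`'th column of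
`W^(c)` and whose other columns are zero. -/
noncomputable def padCol (R : MTree N → ℕ) (W : ∀ ν : MTree N, Fin (R ν) → ℕ → ℝ)
    (c : MTree N) (r : ℕ) : Fin (R c) → ℕ → ℝ :=
  fun i j => if j = r then W c i r else 0

/-- `Ĉ^(ν,r)` : the end tensor obtained by normalizing the `r`'th local component at
`ν` and setting all other local components at `ν` to zero, i.e. the end tensor computed
with `W^(ν)` replaced by `σ^{-1} · PadR_r(W^(ν)_{r,:})` (and `0` if `σ^(ν,r) = 0`). -/
noncomputable def hatC (R : MTree N → ℕ) (W : ∀ ν : MTree N, Fin (R ν) → ℕ → ℝ)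
    (T ν : MTree N) (r : ℕ) : Idx D → ℝ :=
  if sigmaLoc R W T ν r = 0 then 0
  else endT D R (replace R W ν fun i j =>
    if (i : ℕ) = r then (sigmaLoc R W T ν r)⁻¹ * W ν i j else 0) T

/-- The objective `φ_H = L_H ∘ (end tensor)`. -/
noncomputable def obj (L : (Idx D → ℝ) → ℝ) (R : MTree N → ℕ) (T : MTree N)
    (W : ∀ ν : MTree N, Fin (R ν) → ℕ → ℝ) : ℝ :=
  L (endT D R W T)

/-- Update the single entry `(i, j)` of the weight matrix at node `μ` to the value `s`. -/
noncomputable def upd (R : MTree N → ℕ) (W : ∀ ν : MTree N, Fin (R ν) → ℕ → ℝ)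
    (μ : MTree N) (i j : ℕ) (s : ℝ) : ∀ ν : MTree N, Fin (R ν) → ℕ → ℝ :=
  fun ν i' j' => if ν = μ ∧ (i' : ℕ) = i ∧ j' = j then s else W ν i' j'

/-- `∂φ_H/∂W^(μ)_{i,j}` : the partial derivative of the objective with respect to the
`(i,j)` entry of the weight matrix at node `μ`, at the point `W`. -/
noncomputable def dObj (L : (Idx D → ℝ) → ℝ) (R : MTree N → ℕ) (T : MTree N)
    (W : ∀ ν : MTree N, Fin (R ν) → ℕ → ℝ) (μ : MTree N) (i j : ℕ) : ℝ :=
  deriv (fun s : ℝ => obj D L R T (upd R W μ i j s)) (went R W μ i j)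

/-- `∇L(A)` : the gradient of a loss over tensors, entrywise. -/
noncomputable def tgrad (L : (Idx D → ℝ) → ℝ) (A : Idx D → ℝ) : Idx D → ℝ :=
  fun x => deriv (fun s : ℝ => L (Function.update A x s)) (A x)

/-- Local smoothness of the loss: its gradient is Lipschitz on compact sets. -/
def LocSmooth (L : (Idx D → ℝ) → ℝ) : Prop :=
  ∀ K : Set (Idx D → ℝ), IsCompact K → ∃ β : NNReal, LipschitzOnWith β (tgrad D L) K

/-- Gradient flow over the objective: each entry of each weight matrix moves against
its partial derivative. -/
def GradFlow (L : (Idx D → ℝ) → ℝ) (R : MTree N → ℕ) (T : MTree N)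
    (Wt : ℝ → ∀ ν : MTree N, Fin (R ν) → ℕ → ℝ) : Prop :=
  ∀ (ν : MTree N) (i : Fin (R ν)) (j : ℕ) (t : ℝ), 0 ≤ t →
    HasDerivAt (fun s : ℝ => Wt s ν i j) (- dObj D L R T (Wt t) ν (i : ℕ) j) t

/-- The matricization of an order-`N` tensor according to the index set `I` : the
matrix whose rows are indexed by the modes in `I` and whose columns are indexed by the
remaining modes. -/
noncomputable def matricize (I : Finset (Fin N)) (A : Idx D → ℝ) :
    Matrix (∀ i : {n // n ∈ I}, Fin (D i)) (∀ j : {n // n ∉ I}, Fin (D j)) ℝ :=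
  fun ρ κ => A fun n => if h : n ∈ I then ρ ⟨n, h⟩ else κ ⟨n, h⟩

/-- Frobenius norm of the weight matrix `W^(ν) ∈ ℝ^{R_ν × R_{Pa(ν)}}` at node `ν` of `T`. -/
noncomputable def wFro (R : MTree N → ℕ) (W : ∀ ν : MTree N, Fin (R ν) → ℕ → ℝ)
    (T ν : MTree N) : ℝ :=
  Real.sqrt (∑ i : Fin (R ν), ∑ j : Fin (Rpar R T ν), (W ν i (j : ℕ)) ^ 2)

/-- The weights obtained by pruning the `(ν,r)`'th local component: the `r`'th row of
`W^(ν)` and the `r`'th column of `W^(c)` for every child `c` of `ν` are set to zero. -/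
noncomputable def pruneLC (R : MTree N → ℕ) (W : ∀ ν : MTree N, Fin (R ν) → ℕ → ℝ)
    (ν : MTree N) (r : ℕ) : ∀ μ : MTree N, Fin (R μ) → ℕ → ℝ :=
  fun μ i j =>
    if μ = ν ∧ (i : ℕ) = r then 0
    else if μ ∈ ν.children ∧ j = r then 0
    else W μ i j

end HTF

/-!
Pruning the `(ν,r)`'th local component changes the end tensor by exactly the end tensor of the
weights `isolateLC` that keep only that component (`PadR` at `ν`, `PadC` at its children): at `ν`
the pruned factorization drops the `r`'th summand of the sum over local components, and above `ν`
every intermediate tensor is multilinear in the child subtree containing `ν`.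

For any hierarchical factorization, Cauchy–Schwarz over the local components at a node, together
with the multiplicativity of the Frobenius norm for tensor products over disjoint modes, bounds the
norm of each intermediate tensor by the product of the Frobenius norms of the weight matrices
below it. Applied to `isolateLC`, whose weight matrices at `ν` and its children have norms
`‖W^(ν)_{r,:}‖` and `‖W^(c)_{:,r}‖`, this product is `σ^(ν,r)` times the norms of the untouched
weight matrices.
-/

namespace HTF

open Finset

theorem prod_compl_mul_prod_compl {ι M : Type*} [Fintype ι] [DecidableEq ι] [CommMonoid M]
    (f : ι → M) {s u : Finset ι} (hsu : Disjoint s u) :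
    (∏ i ∈ sᶜ, f i) * ∏ i ∈ uᶜ, f i = (∏ i, f i) * ∏ i ∈ (s ∪ u)ᶜ, f i := by
  rw [← prod_union_inter, ← compl_inter, ← compl_union, disjoint_iff_inter_eq_empty.1 hsu,
    compl_empty]

theorem sum_prod_le_prod_sum {ι κ : Type*} (K : Finset κ) (a : ι → κ → ℝ)
    (ha : ∀ i k, 0 ≤ a i k) (i₀ : ι) (l : List ι) :
    ∑ k ∈ K, ((i₀ :: l).map (a · k)).prod ≤ ((i₀ :: l).map fun i => ∑ k ∈ K, a i k).prod := by
  simp only [List.map_cons, List.prod_cons, sum_mul]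
  refine sum_le_sum fun k hk => mul_le_mul_of_nonneg_left ?_ (ha i₀ k)
  exact List.prod_map_le_prod_map₀ _ _ (fun i _ => ha i k) fun i _ =>
    single_le_sum (fun k _ => ha i k) hk

theorem list_prod_map_sq {ι : Type*} (l : List ι) (f : ι → ℝ) :
    (l.map f).prod ^ 2 = (l.map (f · ^ 2)).prod := by
  simp only [sq, List.prod_map_mul]

theorem prod_map_sub_prod_map {ι A : Type*} [CommRing A] {l : List ι} (hl : l.Nodup) {a : ι}
    (ha : a ∈ l) {f g h : ι → A} (hg : ∀ b ∈ l, b ≠ a → g b = f b)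
    (hh : ∀ b ∈ l, b ≠ a → h b = f b) (hfa : f a - g a = h a) :
    (l.map f).prod - (l.map g).prod = (l.map h).prod := by
  induction l with
  | nil => simp at ha
  | cons b l ih =>
      rw [List.nodup_cons] at hl
      simp only [List.map_cons, List.prod_cons]
      by_cases hb : b = a
      · subst hb
        have hne : ∀ c ∈ l, c ≠ b := fun c hc hcb => hl.1 (hcb ▸ hc)
        rw [List.map_congr_left fun c hc => hg c (List.mem_cons_of_mem _ hc) (hne c hc),
          List.map_congr_left fun c hc => hh c (List.mem_cons_of_mem _ hc) (hne c hc), ← hfa]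
        ring
      · rw [hg b List.mem_cons_self hb, hh b List.mem_cons_self hb, ← mul_sub,
          ih hl.2 ((List.mem_cons.1 ha).resolve_left (Ne.symm hb))
            (fun c hc => hg c (List.mem_cons_of_mem _ hc))
            (fun c hc => hh c (List.mem_cons_of_mem _ hc))]

namespace MTree

variable {N : ℕ}

theorem leafList_node (ts : List (MTree N)) : (node ts).leafList = ts.flatMap leafList := by
  rw [leafList, List.flatMap_subtype (g := leafList) fun _ _ => rfl, List.unattach_attach]

theorem nodes_node (ts : List (MTree N)) : (node ts).nodes = node ts :: ts.flatMap nodes := by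
  rw [nodes, List.flatMap_subtype (g := nodes) fun _ _ => rfl, List.unattach_attach]

theorem nodes_eq_cons (t : MTree N) : t.nodes = t :: t.children.flatMap nodes := by
  cases t with
  | leaf i => rw [nodes]; rfl
  | node ts => exact nodes_node ts

theorem sizeOf_lt_of_mem_children {t c : MTree N} (hc : c ∈ t.children) :
    sizeOf c < sizeOf t := by
  cases t with
  | leaf i => simp [children] at hc
  | node ts =>
      have := List.sizeOf_lt_of_mem (show c ∈ ts from hc)
      simp only [node.sizeOf_spec]
      omega

@[elab_as_elim]
theorem children_induction {motive : MTree N → Prop}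
    (step : ∀ t, (∀ c ∈ t.children, motive c) → motive t) (t : MTree N) : motive t :=
  step t fun c _ => children_induction step c
termination_by sizeOf t
decreasing_by exact sizeOf_lt_of_mem_children ‹_›

theorem mem_nodes_self (t : MTree N) : t ∈ t.nodes := by
  rw [nodes_eq_cons]; exact List.mem_cons_self

theorem mem_nodes_of_mem_children {t c : MTree N} (hc : c ∈ t.children) : c ∈ t.nodes := by
  rw [nodes_eq_cons]
  exact List.mem_cons_of_mem _ (List.mem_flatMap.2 ⟨c, hc, mem_nodes_self c⟩)

theorem mem_nodes_iff {t μ : MTree N} :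
    μ ∈ t.nodes ↔ μ = t ∨ ∃ c ∈ t.children, μ ∈ c.nodes := by
  rw [nodes_eq_cons, List.mem_cons, List.mem_flatMap]

theorem nodes_trans {t s μ : MTree N} (hμ : μ ∈ s.nodes) (hs : s ∈ t.nodes) : μ ∈ t.nodes := by
  induction t using children_induction with
  | step t ih =>
    rcases mem_nodes_iff.1 hs with rfl | ⟨c, hc, hsc⟩
    · exact hμ
    · exact mem_nodes_iff.2 (Or.inr ⟨c, hc, ih c hc hsc⟩)

theorem sizeOf_le_of_mem_nodes {t μ : MTree N} (hμ : μ ∈ t.nodes) : sizeOf μ ≤ sizeOf t := by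
  induction t using children_induction with
  | step t ih =>
    rcases mem_nodes_iff.1 hμ with rfl | ⟨c, hc, hμc⟩
    · exact le_rfl
    · exact (ih c hc hμc).trans (sizeOf_lt_of_mem_children hc).le

theorem notMem_nodes_of_mem_children {t c : MTree N} (hc : c ∈ t.children) : t ∉ c.nodes :=
  fun h => (sizeOf_le_of_mem_nodes h).not_gt (sizeOf_lt_of_mem_children hc)

theorem leafList_subset_of_mem_nodes {t μ : MTree N} (hμ : μ ∈ t.nodes) :
    μ.leafList ⊆ t.leafList := by
  induction t using children_induction with
  | step t ih =>
    rcases mem_nodes_iff.1 hμ with rfl | ⟨c, hc, hμc⟩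
    · exact List.Subset.refl _
    · cases t with
      | leaf i => simp [children] at hc
      | node ts =>
          rw [leafList_node]
          exact fun i hi => List.mem_flatMap.2 ⟨c, hc, ih c hc hμc hi⟩

theorem Branching.leafList_ne_nil {t : MTree N} (hb : t.Branching) : t.leafList ≠ [] := by
  induction t using children_induction with
  | step t ih =>
    cases t with
    | leaf i => simp [leafList]
    | node ts =>
        rw [Branching] at hb
        obtain ⟨c, hc⟩ := List.exists_mem_of_ne_nil _ hb.1
        obtain ⟨i, hi⟩ := List.exists_mem_of_ne_nil _ (ih c hc (hb.2 ⟨c, hc⟩ (List.mem_attach _ _)))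
        rw [leafList_node]
        exact List.ne_nil_of_mem (List.mem_flatMap.2 ⟨c, hc, hi⟩)

/-- `Valid` without the requirement that every mode occurs; unlike `Valid`, it passes to
subtrees. -/
def WellFormed (t : MTree N) : Prop :=
  t.leafList.Nodup ∧ t.Branching

theorem Valid.wellFormed {t : MTree N} (ht : t.Valid) : t.WellFormed :=
  ⟨ht.1, ht.2.2⟩

namespace WellFormed

variable {t c c' μ : MTree N}

theorem pairwise_disjoint (ht : t.WellFormed) :
    t.children.Pairwise (Function.onFun List.Disjoint leafList) := by
  cases t with
  | leaf i => exact List.Pairwise.nil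
  | node ts =>
      have := ht.1
      rw [leafList_node, List.nodup_flatMap] at this
      exact this.2

theorem of_mem_children (ht : t.WellFormed) (hc : c ∈ t.children) : c.WellFormed := by
  cases t with
  | leaf i => simp [children] at hc
  | node ts =>
      have hnd := ht.1
      rw [leafList_node, List.nodup_flatMap] at hnd
      have hb := ht.2
      rw [Branching] at hb
      exact ⟨hnd.1 c hc, hb.2 ⟨c, hc⟩ (List.mem_attach _ _)⟩

theorem of_mem_nodes (ht : t.WellFormed) (hμ : μ ∈ t.nodes) : μ.WellFormed := by
  induction t using children_induction with
  | step t ih =>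
    rcases mem_nodes_iff.1 hμ with rfl | ⟨c, hc, hμc⟩
    · exact ht
    · exact ih c hc (ht.of_mem_children hc) hμc

theorem disjoint_leafList (ht : t.WellFormed) (hc : c ∈ t.children) (hc' : c' ∈ t.children)
    (hne : c ≠ c') : c.leafList.Disjoint c'.leafList :=
  haveI : Std.Symm (Function.onFun List.Disjoint (@leafList N)) := ⟨fun _ _ h => h.symm⟩
  ht.pairwise_disjoint.forall hc hc' hne

theorem children_nodup (ht : t.WellFormed) : t.children.Nodup :=
  ht.pairwise_disjoint.imp_of_mem fun {a _} ha _ hab heq => by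
    subst heq
    obtain ⟨i, hi⟩ := List.exists_mem_of_ne_nil _ (ht.of_mem_children ha).2.leafList_ne_nil
    exact hab hi hi

theorem notMem_nodes_of_ne (ht : t.WellFormed) (hc : c ∈ t.children) (hc' : c' ∈ t.children)
    (hne : c ≠ c') (hμ : μ ∈ c.nodes) : μ ∉ c'.nodes := fun hμ' => by
  obtain ⟨i, hi⟩ := List.exists_mem_of_ne_nil _
    ((ht.of_mem_children hc).of_mem_nodes hμ).2.leafList_ne_nil
  exact ht.disjoint_leafList hc hc' hne (leafList_subset_of_mem_nodes hμ hi)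
    (leafList_subset_of_mem_nodes hμ' hi)

theorem nodes_nodup (ht : t.WellFormed) : t.nodes.Nodup := by
  induction t using children_induction with
  | step t ih =>
    rw [nodes_eq_cons, List.nodup_cons, List.mem_flatMap, List.nodup_flatMap]
    refine ⟨fun ⟨c, hc, htc⟩ => notMem_nodes_of_mem_children hc htc,
      fun c hc => ih c hc (ht.of_mem_children hc), ?_⟩
    exact ht.children_nodup.pairwise_of_forall_ne fun c hc c' hc' hne μ hμ hμ' =>
      ht.notMem_nodes_of_ne hc hc' hne hμ hμ'

end WellFormed

theorem parentIn_node (ts : List (MTree N)) (c : MTree N) :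
    parentIn (node ts) c = if c ∈ ts then some (node ts) else ts.findSome? (parentIn · c) := by
  rw [parentIn, ← List.attach_map_subtype_val ts, List.findSome?_map, List.attach_map_subtype_val]
  rfl

theorem mem_nodes_of_parentIn_eq_some {T c p : MTree N} (h : parentIn T c = some p) :
    c ∈ T.nodes := by
  induction T using children_induction with
  | step T ih =>
    cases T with
    | leaf i => simp [parentIn] at h
    | node ts =>
        rw [parentIn_node] at h
        split_ifs at h with hc
        · exact mem_nodes_of_mem_children hc
        · obtain ⟨s, hs, hps⟩ := List.exists_of_findSome?_eq_some h
          exact nodes_trans (ih s hs hps) (mem_nodes_of_mem_children hs)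

theorem WellFormed.parentIn_eq {T t c : MTree N} (hT : T.WellFormed) (ht : t ∈ T.nodes)
    (hc : c ∈ t.children) : parentIn T c = some t := by
  induction T using children_induction with
  | step T ih =>
    cases T with
    | leaf i =>
        simp [nodes] at ht
        simp [ht, children] at hc
    | node ts =>
        rw [parentIn_node]
        rcases mem_nodes_iff.1 ht with rfl | ⟨s, hs, hts⟩
        · exact if_pos hc
        have hcs : c ∈ s.nodes := nodes_trans (mem_nodes_of_mem_children hc) hts
        have hcts : c ∉ ts := fun hcts => by
          have hne : c ≠ s := by
            rintro rfl
            exact notMem_nodes_of_mem_children hc hts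
          exact hT.notMem_nodes_of_ne hcts hs hne (mem_nodes_self c) hcs
        rw [if_neg hcts]
        have hsome : parentIn s c = some t := ih s hs (hT.of_mem_children hs) hts
        obtain ⟨p, hp⟩ := Option.isSome_iff_exists.1
          ((List.findSome?_isSome_iff (f := (parentIn · c))).2 ⟨s, hs, by simp [hsome]⟩)
        obtain ⟨s', hs', hps'⟩ := List.exists_of_findSome?_eq_some hp
        obtain rfl : s' = s := by
          by_contra hne
          exact hT.notMem_nodes_of_ne hs' hs hne (mem_nodes_of_parentIn_eq_some hps') hcs
        exact hp.trans (hps'.symm.trans hsome)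

theorem ne_of_mem_children {t c : MTree N} (hc : c ∈ t.children) : c ≠ t :=
  fun h => notMem_nodes_of_mem_children hc (h ▸ mem_nodes_self c)

theorem WellFormed.notMem_children {t c μ : MTree N} (ht : t.WellFormed)
    (hc : c ∈ t.children) (hμ : μ ∈ c.nodes) (hμc : μ ≠ c) : μ ∉ t.children :=
  fun h => ht.notMem_nodes_of_ne h hc hμc (mem_nodes_self μ) hμ

theorem WellFormed.filter_nodes_perm {T ν : MTree N} (hT : T.WellFormed) (hν : ν ∈ T.nodes) :
    (T.nodes.filter fun μ => μ = ν ∨ μ ∈ ν.children).Perm (ν :: ν.children) := by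
  refine (List.perm_ext_iff_of_nodup (hT.nodes_nodup.filter _) (List.nodup_cons.2
    ⟨fun h => ne_of_mem_children h rfl, (hT.of_mem_nodes hν).children_nodup⟩)).2 fun μ => ?_
  simp only [List.mem_filter, List.mem_cons, decide_eq_true_eq, and_iff_right_iff_imp]
  rintro (rfl | h)
  · exact hν
  · exact nodes_trans (mem_nodes_of_mem_children h) hν

end MTree

open MTree

variable {N : ℕ}

theorem Rpar_self (R : MTree N → ℕ) (T : MTree N) : Rpar R T T = 1 :=
  if_pos rfl

theorem Rpar_of_mem_children {T t c : MTree N} (R : MTree N → ℕ) (hT : T.WellFormed)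
    (ht : t ∈ T.nodes) (hc : c ∈ t.children) : Rpar R T c = R t := by
  have hcT : c ≠ T := by
    rintro rfl
    exact notMem_nodes_of_mem_children hc ht
  rw [Rpar, if_neg hcT, hT.parentIn_eq ht hc]
  rfl

section

variable (D : Fin N → ℕ)

theorem interm_node (R : MTree N → ℕ) (W : ∀ ν : MTree N, Fin (R ν) → ℕ → ℝ)
    (ts : List (MTree N)) (j : ℕ) (x : Idx D) :
    interm D R W (.node ts) j x = ∑ r' : Fin (R (.node ts)),
      W (.node ts) r' j * (ts.map fun c => interm D R W c r' x).prod := by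
  simp only [interm]
  exact sum_congr rfl fun r' _ => by rw [List.attach_map_val (f := fun c => interm D R W c r' x)]

theorem dependsOn_interm (R : MTree N → ℕ) (W : ∀ ν : MTree N, Fin (R ν) → ℕ → ℝ)
    (t : MTree N) (j : ℕ) : DependsOn (interm D R W t j) (t.label : Set (Fin N)) := by
  induction t using children_induction generalizing j with
  | step t ih =>
    intro x y hxy
    cases t with
    | leaf i =>
        have : x i = y i := hxy i (by simp [label, leafList])
        simp only [interm, this]
    | node ts =>
        simp only [interm_node]
        refine sum_congr rfl fun r' _ => congrArg _ (congrArg List.prod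
          (List.map_congr_left fun c hc => ih c hc r' fun n hn => hxy n ?_))
        simp only [label, Finset.mem_coe, List.mem_toFinset] at hn ⊢
        exact leafList_subset_of_mem_nodes (mem_nodes_of_mem_children hc) hn

theorem interm_congr (R : MTree N → ℕ) {W₁ W₂ : ∀ ν : MTree N, Fin (R ν) → ℕ → ℝ}
    {t : MTree N} {j : ℕ} (hsub : ∀ μ ∈ t.nodes, μ ≠ t → W₁ μ = W₂ μ)
    (hcol : ∀ i, W₁ t i j = W₂ t i j) : interm D R W₁ t j = interm D R W₂ t j := by
  induction t using children_induction generalizing j with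
  | step t ih =>
    funext x
    cases t with
    | leaf i => simp only [interm, hcol]
    | node ts =>
        simp only [interm_node, hcol]
        refine sum_congr rfl fun r' _ => congrArg _ (congrArg List.prod
          (List.map_congr_left fun c hc => ?_))
        have hc_nodes : ∀ μ ∈ c.nodes, W₁ μ = W₂ μ := fun μ hμ =>
          hsub μ (nodes_trans hμ (mem_nodes_of_mem_children hc)) fun h =>
            notMem_nodes_of_mem_children hc (h ▸ hμ)
        exact congrFun (ih c hc (fun μ hμ _ => hc_nodes μ hμ)
          fun i => by rw [hc_nodes c (mem_nodes_self c)]) x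

theorem card_idx : (Fintype.card (Idx D) : ℝ) = ∏ n, (D n : ℝ) := by
  simp [Fintype.card_pi]

/-- Functions of disjoint groups of modes are independent under the counting measure. -/
theorem sum_mul_sum_of_dependsOn {s u : Finset (Fin N)} {f g : Idx D → ℝ}
    (hf : DependsOn f (s : Set (Fin N))) (hg : DependsOn g (u : Set (Fin N)))
    (hsu : Disjoint s u) :
    (∑ x, f x) * (∑ x, g x) = (∏ n, (D n : ℝ)) * ∑ x, f x * g x := by
  let σ : Idx D × Idx D → Idx D × Idx D := fun p => (s.piecewise p.1 p.2, s.piecewise p.2 p.1)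
  have hσ : Function.Involutive σ := fun p => by
    ext n <;> by_cases hn : n ∈ s <;> simp [σ, hn]
  calc (∑ x, f x) * (∑ x, g x) = ∑ p : Idx D × Idx D, f p.1 * g p.2 := by
        rw [sum_mul_sum, Fintype.sum_prod_type]
    _ = ∑ p : Idx D × Idx D, f (σ p).1 * g (σ p).2 := (Equiv.sum_comp (hσ.toPerm σ) _).symm
    _ = ∑ p : Idx D × Idx D, f p.1 * g p.1 := by
        refine Fintype.sum_congr _ _ fun p => ?_
        change f (s.piecewise p.1 p.2) * g (s.piecewise p.2 p.1) = _
        rw [hf (y := p.1) fun n hn => piecewise_eq_of_mem _ _ _ hn,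
          hg (y := p.1) fun n hn => piecewise_eq_of_notMem _ _ _ (disjoint_right.1 hsu hn)]
    _ = (∏ n, (D n : ℝ)) * ∑ x, f x * g x := by
        simp only [Fintype.sum_prod_type_right, sum_const, card_univ, nsmul_eq_mul, card_idx]

theorem rnorm_sq (s : Finset (Fin N)) (f : Idx D → ℝ) :
    rnorm D s f ^ 2 = (∑ x, f x ^ 2) / ∏ n ∈ sᶜ, (D n : ℝ) :=
  Real.sq_sqrt (by positivity)

theorem rnorm_univ (f : Idx D → ℝ) : rnorm D univ f = tnorm D f := by
  simp [rnorm, tnorm]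

theorem rnorm_mul (hD : ∀ n, 0 < D n) {s u : Finset (Fin N)} {f g : Idx D → ℝ}
    (hf : DependsOn f (s : Set (Fin N))) (hg : DependsOn g (u : Set (Fin N)))
    (hsu : Disjoint s u) :
    rnorm D (s ∪ u) (fun x => f x * g x) = rnorm D s f * rnorm D u g := by
  have hpos : ∀ v : Finset (Fin N), 0 < ∏ n ∈ v, (D n : ℝ) := fun v =>
    prod_pos fun n _ => by exact_mod_cast hD n
  have hsq : (∑ x, f x ^ 2) * (∑ x, g x ^ 2) = (∏ n, (D n : ℝ)) * ∑ x, (f x * g x) ^ 2 := by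
    simp only [mul_pow]
    exact sum_mul_sum_of_dependsOn D (fun x y h => by rw [hf h]) (fun x y h => by rw [hg h]) hsu
  rw [rnorm, rnorm, rnorm, ← Real.sqrt_mul (by positivity), div_mul_div_comm, hsq,
    prod_compl_mul_prod_compl _ hsu, mul_div_mul_left _ _ (hpos univ).ne']

theorem rnorm_list_prod (hD : ∀ n, 0 < D n) (cs : List (MTree N)) (f : MTree N → Idx D → ℝ)
    (hnd : (cs.flatMap leafList).Nodup) (hf : ∀ c ∈ cs, DependsOn (f c) (c.label : Set (Fin N))) :
    rnorm D (cs.flatMap leafList).toFinset (fun x => (cs.map (f · x)).prod)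
      = (cs.map fun c => rnorm D c.label (f c)).prod := by
  induction cs with
  | nil =>
      have hpos : (0 : ℝ) < ∏ n, (D n : ℝ) := prod_pos fun n _ => by exact_mod_cast hD n
      simp [rnorm, hpos.ne']
  | cons c cs ih =>
      rw [List.flatMap_cons, List.nodup_append] at hnd
      have hdisj : Disjoint c.label (cs.flatMap leafList).toFinset :=
        disjoint_left.2 fun n hn hn' =>
          hnd.2.2 n (List.mem_toFinset.1 hn) n (List.mem_toFinset.1 hn') rfl
      have hdep : DependsOn (fun x => (cs.map (f · x)).prod)
          ((cs.flatMap leafList).toFinset : Set (Fin N)) := fun x y h =>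
        congrArg List.prod (List.map_congr_left fun c' hc' => hf c' (List.mem_cons_of_mem _ hc')
          fun n hn => h n (by
            simp only [label, Finset.mem_coe, List.mem_toFinset] at hn ⊢
            exact List.mem_flatMap.2 ⟨c', hc', hn⟩))
      simp only [List.flatMap_cons, List.toFinset_append, List.map_cons, List.prod_cons]
      rw [← ih hnd.2.1 fun c' hc' => hf c' (List.mem_cons_of_mem _ hc')]
      exact rnorm_mul D hD (hf c List.mem_cons_self) hdep hdisj

theorem rnorm_sum_mul_sq_le {κ : Type*} (s : Finset (Fin N)) (K : Finset κ) (a : κ → ℝ)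
    (g : κ → Idx D → ℝ) :
    rnorm D s (fun x => ∑ k ∈ K, a k * g k x) ^ 2
      ≤ (∑ k ∈ K, a k ^ 2) * ∑ k ∈ K, rnorm D s (g k) ^ 2 := by
  simp only [rnorm_sq, ← sum_div, ← mul_div_assoc]
  gcongr
  calc ∑ x, (∑ k ∈ K, a k * g k x) ^ 2
      ≤ ∑ x, (∑ k ∈ K, a k ^ 2) * ∑ k ∈ K, g k x ^ 2 :=
        sum_le_sum fun x _ => sum_mul_sq_le_sq_mul_sq K _ _
    _ = (∑ k ∈ K, a k ^ 2) * ∑ k ∈ K, ∑ x, g k x ^ 2 := by rw [← mul_sum, sum_comm]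

theorem sum_comp_apply (i : Fin N) (g : Fin (D i) → ℝ) :
    ∑ x : Idx D, g (x i) = (∏ n ∈ {i}ᶜ, (D n : ℝ)) * ∑ a, g a := by
  calc ∑ x : Idx D, g (x i) = ∑ p : Fin (D i) × (∀ n : {n // n ≠ i}, Fin (D n)), g p.1 :=
        Fintype.sum_equiv (Equiv.piSplitAt i fun n => Fin (D n)) _ _ fun _ => rfl
    _ = (∏ n ∈ {i}ᶜ, (D n : ℝ)) * ∑ a, g a := by
        rw [Fintype.sum_prod_type, mul_sum]
        refine sum_congr rfl fun a _ => ?_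
        simp only [sum_const, card_univ, nsmul_eq_mul, Fintype.card_pi, Fintype.card_fin]
        push_cast
        rw [← prod_subtype ({i}ᶜ : Finset (Fin N)) (by simp) (fun n => (D n : ℝ))]

variable (R : MTree N → ℕ) (W : ∀ ν : MTree N, Fin (R ν) → ℕ → ℝ)

theorem rnorm_interm_leaf_sq_le (hD : ∀ n, 0 < D n) (i : Fin N) (j : ℕ) :
    rnorm D (leaf i).label (interm D R W (.leaf i) j) ^ 2
      ≤ ∑ a : Fin (R (.leaf i)), W (.leaf i) a j ^ 2 := by
  have hlabel : (leaf i : MTree N).label = {i} := by simp [label, leafList]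
  rw [rnorm_sq, hlabel]
  by_cases h : R (.leaf i) = D i
  · have hsum : ∑ x, interm D R W (.leaf i) j x ^ 2
        = (∏ n ∈ {i}ᶜ, (D n : ℝ)) * ∑ a : Fin (R (.leaf i)), W (.leaf i) a j ^ 2 := by
      simp only [interm, dif_pos h]
      rw [sum_comp_apply D i fun a => W (.leaf i) (Fin.cast h.symm a) j ^ 2]
      congr 1
      exact Fintype.sum_equiv (finCongr h.symm) _ (fun a => W (.leaf i) a j ^ 2) fun _ => rfl
    rw [hsum, mul_div_cancel_left₀ _ (prod_pos fun n _ => by exact_mod_cast hD n).ne']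
  · simp only [interm, dif_neg h]
    simp only [ne_eq, OfNat.ofNat_ne_zero, not_false_eq_true, zero_pow, sum_const_zero, zero_div]
    positivity

theorem rnorm_interm_node_sq_le (hD : ∀ n, 0 < D n) {ts : List (MTree N)}
    (hwf : (node ts).WellFormed) (j : ℕ) :
    rnorm D (node ts).label (interm D R W (.node ts) j) ^ 2
      ≤ (∑ r' : Fin (R (.node ts)), W (.node ts) r' j ^ 2) *
        (ts.map fun c =>
          ∑ k ∈ range (R (.node ts)), rnorm D c.label (interm D R W c k) ^ 2).prod := by
  have hnd : (ts.flatMap leafList).Nodup := by rw [← leafList_node]; exact hwf.1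
  have hlabel : (node ts).label = (ts.flatMap leafList).toFinset := by rw [label, leafList_node]
  have hne : ts ≠ [] := by have := hwf.2; rw [Branching] at this; exact this.1
  obtain ⟨c₀, rest, rfl⟩ := List.exists_cons_of_ne_nil hne
  set t : MTree N := node (c₀ :: rest)
  have hfactor : ∀ r' : Fin (R t), rnorm D t.label
      (fun x => ((c₀ :: rest).map fun c => interm D R W c r' x).prod) ^ 2
        = ((c₀ :: rest).map fun c => rnorm D c.label (interm D R W c r') ^ 2).prod := fun r' => by
    rw [hlabel, rnorm_list_prod D hD _ (fun c => interm D R W c r') hnd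
      fun c _ => dependsOn_interm D R W c r', list_prod_map_sq]
  calc rnorm D t.label (interm D R W t j) ^ 2
      = rnorm D t.label (fun x => ∑ r' : Fin (R t), W t r' j *
          ((c₀ :: rest).map fun c => interm D R W c r' x).prod) ^ 2 := by
        simp only [t, ← interm_node]
    _ ≤ (∑ r' : Fin (R t), W t r' j ^ 2) *
          ∑ r' : Fin (R t),
            ((c₀ :: rest).map fun c => rnorm D c.label (interm D R W c r') ^ 2).prod := by
        simp only [← hfactor]
        exact rnorm_sum_mul_sq_le D _ _ _ _
    _ ≤ (∑ r' : Fin (R t), W t r' j ^ 2) *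
          ((c₀ :: rest).map fun c =>
            ∑ r' : Fin (R t), rnorm D c.label (interm D R W c r') ^ 2).prod := by
        gcongr
        exact sum_prod_le_prod_sum univ
          (fun c (r' : Fin (R t)) => rnorm D c.label (interm D R W c r') ^ 2)
          (fun _ _ => sq_nonneg _) c₀ rest
    _ = _ := by
        refine congrArg _ (congrArg List.prod (List.map_congr_left fun c _ => ?_))
        exact Fin.sum_univ_eq_sum_range (fun k => rnorm D c.label (interm D R W c k) ^ 2) _

theorem sum_rnorm_interm_sq_le (hD : ∀ n, 0 < D n) {T : MTree N} (hT : T.WellFormed)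
    {t : MTree N} (ht : t ∈ T.nodes) :
    ∑ j ∈ range (Rpar R T t), rnorm D t.label (interm D R W t j) ^ 2
      ≤ (t.nodes.map (wFro R W T)).prod ^ 2 := by
  induction t using children_induction with
  | step t ih =>
  have hW : wFro R W T t ^ 2 = ∑ j ∈ range (Rpar R T t), ∑ i : Fin (R t), W t i j ^ 2 := by
    rw [wFro, Real.sq_sqrt (by positivity), sum_comm,
      Fin.sum_univ_eq_sum_range (fun j => ∑ i : Fin (R t), W t i j ^ 2)]
  have hnodes : (t.nodes.map (wFro R W T)).prod ^ 2
      = wFro R W T t ^ 2 * (t.children.map fun c => (c.nodes.map (wFro R W T)).prod ^ 2).prod := by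
    rw [nodes_eq_cons, List.map_cons, List.prod_cons, mul_pow, List.map_flatMap,
      List.flatMap, List.prod_flatten, List.map_map, list_prod_map_sq]
    rfl
  rw [hnodes, hW, sum_mul]
  refine sum_le_sum fun j _ => ?_
  cases t with
  | leaf i =>
      simpa [children] using rnorm_interm_leaf_sq_le D R W hD i j
  | node ts =>
      refine (rnorm_interm_node_sq_le D R W hD (hT.of_mem_nodes ht) j).trans ?_
      gcongr
      refine List.prod_map_le_prod_map₀ _ _ (fun c _ => by positivity) fun c hc => ?_
      replace hc : c ∈ (node ts).children := hc
      rw [← Rpar_of_mem_children R hT ht hc]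
      exact ih c hc (nodes_trans (mem_nodes_of_mem_children hc) ht)

end

section

variable (R : MTree N → ℕ) (W : ∀ ν : MTree N, Fin (R ν) → ℕ → ℝ)

noncomputable def isolateLC (ν : MTree N) (r : ℕ) : ∀ μ : MTree N, Fin (R μ) → ℕ → ℝ :=
  fun μ =>
    if μ = ν then padRow R W μ r
    else if μ ∈ ν.children then padCol R W μ r
    else W μ

variable {R W} {ν μ : MTree N} {r : ℕ}

theorem isolateLC_of_notMem (h₁ : μ ≠ ν) (h₂ : μ ∉ ν.children) :
    isolateLC R W ν r μ = W μ := by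
  simp [isolateLC, h₁, h₂]

theorem pruneLC_of_notMem (h₁ : μ ≠ ν) (h₂ : μ ∉ ν.children) : pruneLC R W ν r μ = W μ := by
  funext i j
  simp [pruneLC, h₁, h₂]

variable (D : Fin N → ℕ)

theorem interm_isolateLC_of_forall_notMem {t : MTree N} (j : ℕ)
    (h : ∀ μ ∈ t.nodes, μ ≠ ν ∧ μ ∉ ν.children) :
    interm D R (isolateLC R W ν r) t j = interm D R W t j :=
  interm_congr D R (fun μ hμ _ => isolateLC_of_notMem (h μ hμ).1 (h μ hμ).2) fun i => by
    rw [isolateLC_of_notMem (h t (mem_nodes_self t)).1 (h t (mem_nodes_self t)).2]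

theorem interm_pruneLC_of_forall_notMem {t : MTree N} (j : ℕ)
    (h : ∀ μ ∈ t.nodes, μ ≠ ν ∧ μ ∉ ν.children) :
    interm D R (pruneLC R W ν r) t j = interm D R W t j :=
  interm_congr D R (fun μ hμ _ => pruneLC_of_notMem (h μ hμ).1 (h μ hμ).2) fun i => by
    rw [pruneLC_of_notMem (h t (mem_nodes_self t)).1 (h t (mem_nodes_self t)).2]

theorem interm_sub_interm_pruneLC_self (hν : ν.WellFormed) (j : ℕ) (x : Idx D) :
    interm D R W ν j x - interm D R (pruneLC R W ν r) ν j x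
      = interm D R (isolateLC R W ν r) ν j x := by
  cases ν with
  | leaf i =>
      simp only [interm]
      split_ifs <;> simp [pruneLC, isolateLC, padRow, children]
      split_ifs <;> simp
  | node ts =>
      have hsub : ∀ c ∈ ts, ∀ μ ∈ c.nodes, μ ≠ c → μ ≠ node ts ∧ μ ∉ (node ts).children :=
        fun c hc μ hμ hμc => ⟨fun h => notMem_nodes_of_mem_children (t := node ts) hc (h ▸ hμ),
          hν.notMem_children hc hμ hμc⟩
      have hpr : ∀ c ∈ ts, ∀ k : ℕ, k ≠ r →
          interm D R (pruneLC R W (node ts) r) c k = interm D R W c k := fun c hc k hk =>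
        interm_congr D R (fun μ hμ hμc => pruneLC_of_notMem (hsub c hc μ hμ hμc).1
          (hsub c hc μ hμ hμc).2) fun i => by
            simp [pruneLC, ne_of_mem_children (t := node ts) hc, hk]
      have hiso : ∀ c ∈ ts, interm D R (isolateLC R W (node ts) r) c r = interm D R W c r :=
        fun c hc => interm_congr D R (fun μ hμ hμc => isolateLC_of_notMem
          (hsub c hc μ hμ hμc).1 (hsub c hc μ hμ hμc).2) fun i => by
            have hc' : c ∈ (node ts).children := hc
            simp [isolateLC, padCol, ne_of_mem_children hc', hc']
      have hself : node ts ∉ (node ts).children := fun h => ne_of_mem_children h rfl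
      simp only [interm_node, ← sum_sub_distrib]
      refine sum_congr rfl fun r' _ => ?_
      by_cases hr : (r' : ℕ) = r
      · have hprod := List.map_congr_left fun c hc => congrFun (hiso c hc) x
        simp only [hr] at hprod ⊢
        simp [pruneLC, isolateLC, padRow, hr, hprod]
      · have hprod := List.map_congr_left fun c hc => congrFun (hpr c hc r' hr) x
        simp [pruneLC, isolateLC, padRow, hr, hprod, hself]

theorem interm_sub_interm_pruneLC {t : MTree N} (ht : t.WellFormed) (hν : ν ∈ t.nodes)
    (j : ℕ) (x : Idx D) :
    interm D R W t j x - interm D R (pruneLC R W ν r) t j x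
      = interm D R (isolateLC R W ν r) t j x := by
  induction t using children_induction generalizing j with
  | step t ih =>
  rcases mem_nodes_iff.1 hν with rfl | ⟨s, hs, hνs⟩
  · exact interm_sub_interm_pruneLC_self D ht j x
  have htν : t ≠ ν := by
    rintro rfl
    exact notMem_nodes_of_mem_children hs hνs
  have htc : t ∉ ν.children := fun h =>
    notMem_nodes_of_mem_children hs (nodes_trans (mem_nodes_of_mem_children h) hνs)
  have hother : ∀ c ∈ t.children, c ≠ s → ∀ μ ∈ c.nodes, μ ≠ ν ∧ μ ∉ ν.children :=
    fun c hc hcs μ hμ => ⟨fun h => ht.notMem_nodes_of_ne hs hc hcs.symm hνs (h ▸ hμ),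
      fun h => ht.notMem_nodes_of_ne hs hc hcs.symm
        (nodes_trans (mem_nodes_of_mem_children h) hνs) hμ⟩
  cases t with
  | leaf i => simp [children] at hs
  | node ts =>
      simp only [interm_node, ← sum_sub_distrib, pruneLC_of_notMem htν htc,
        isolateLC_of_notMem htν htc, ← mul_sub]
      refine sum_congr rfl fun r' _ => congrArg _ ?_
      exact prod_map_sub_prod_map ht.children_nodup hs
        (fun c hc hcs => congrFun (interm_pruneLC_of_forall_notMem D r' (hother c hc hcs)) x)
        (fun c hc hcs => congrFun (interm_isolateLC_of_forall_notMem D r' (hother c hc hcs)) x)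
        (ih s hs (ht.of_mem_children hs) hνs r')

end

section

variable {R : MTree N → ℕ} {W : ∀ ν : MTree N, Fin (R ν) → ℕ → ℝ} {T ν : MTree N}

theorem wFro_isolateLC_self (r : Fin (R ν)) :
    wFro R (isolateLC R W ν r) T ν = Real.sqrt (rowSq R W T ν r) := by
  rw [wFro, rowSq, sum_comm]
  congr 1
  refine sum_congr rfl fun j _ => ?_
  rw [sum_eq_single r (fun i _ hi => by simp [isolateLC, padRow, Fin.val_ne_of_ne hi]) (by simp)]
  simp [isolateLC, padRow, went]

theorem wFro_isolateLC_of_mem_children (hT : T.WellFormed) (hν : ν ∈ T.nodes) (r : Fin (R ν))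
    {c : MTree N} (hc : c ∈ ν.children) :
    wFro R (isolateLC R W ν r) T c = Real.sqrt (colSq R W c r) := by
  have hr : (r : ℕ) ∈ range (Rpar R T c) := by
    rw [Rpar_of_mem_children R hT hν hc]; exact mem_range.2 r.2
  rw [wFro, colSq]
  congr 1
  refine sum_congr rfl fun i _ => ?_
  simp only [isolateLC, ne_of_mem_children hc, hc, if_true, if_false, padCol]
  rw [Fin.sum_univ_eq_sum_range (fun j => (if j = (r : ℕ) then W c i r else 0) ^ 2)]
  simp [hr]

theorem wFro_isolateLC_of_notMem {μ : MTree N} {r : ℕ} (h₁ : μ ≠ ν) (h₂ : μ ∉ ν.children) :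
    wFro R (isolateLC R W ν r) T μ = wFro R W T μ := by
  rw [wFro, wFro, isolateLC_of_notMem h₁ h₂]

theorem prod_wFro_isolateLC (hT : T.WellFormed) (hν : ν ∈ T.nodes) (r : Fin (R ν)) :
    (T.nodes.map (wFro R (isolateLC R W ν r) T)).prod
      = sigmaLoc R W T ν r *
        ((T.nodes.filter fun μ => ¬(μ = ν ∨ μ ∈ ν.children)).map (wFro R W T)).prod := by
  rw [← List.prod_map_filter_mul_prod_map_filter_not (fun μ => μ = ν ∨ μ ∈ ν.children)]
  congr 1
  · rw [((hT.filter_nodes_perm hν).map _).prod_eq, List.map_cons, List.prod_cons,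
      wFro_isolateLC_self, sigmaLoc,
      List.map_congr_left fun c hc => wFro_isolateLC_of_mem_children hT hν r hc]
  · refine congrArg List.prod (List.map_congr_left fun μ hμ => ?_)
    simp only [List.mem_filter, decide_eq_true_eq, not_or] at hμ
    exact wFro_isolateLC_of_notMem hμ.2.1 hμ.2.2

end

end HTF

open HTF HTF.MTree in
theorem statement14_general {N : ℕ} (D : Fin N → ℕ) (T : MTree N) (hT : T.Valid)
    (R : MTree N → ℕ)
    (W : ∀ ν : MTree N, Fin (R ν) → ℕ → ℝ)
    (ν : MTree N) (hν : ν ∈ T.nodes) (r : Fin (R ν)) :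
    tnorm D (fun x => endT D R W T x - endT D R (pruneLC R W ν (r : ℕ)) T x)
      ≤ sigmaLoc R W T ν (r : ℕ) *
        ((T.nodes.filter fun μ => ¬(μ = ν ∨ μ ∈ ν.children)).map fun μ =>
          wFro R W T μ).prod := by
  have hwf := hT.wellFormed
  rw [← prod_wFro_isolateLC hwf hν r]
  have hprod_nonneg : 0 ≤ (T.nodes.map (wFro R (isolateLC R W ν r) T)).prod :=
    List.prod_nonneg fun a ha => by
      obtain ⟨μ, -, rfl⟩ := List.mem_map.1 ha
      exact Real.sqrt_nonneg _
  by_cases hD : ∀ n, 0 < D n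
  · have hlabel : T.label = Finset.univ :=
      Finset.eq_univ_of_forall fun i => List.mem_toFinset.2 (hT.2.1 i)
    have hdiff : (fun x => endT D R W T x - endT D R (pruneLC R W ν r) T x)
        = interm D R (isolateLC R W ν r) T 0 :=
      funext fun x => interm_sub_interm_pruneLC D hwf hν 0 x
    have hbound := sum_rnorm_interm_sq_le D R (isolateLC R W ν r) hD hwf (mem_nodes_self T)
    rw [Rpar_self, Finset.sum_range_one, hlabel, rnorm_univ, ← hdiff] at hbound
    exact (pow_le_pow_iff_left₀ (Real.sqrt_nonneg _) hprod_nonneg two_ne_zero).1 hbound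
  · obtain ⟨n, hn⟩ := not_forall.1 hD
    have : IsEmpty (Idx D) := ⟨fun x => hn (x n).pos⟩
    simpa [tnorm] using hprod_nonneg

open HTF HTF.MTree in
/-- Lemma 8 in the paper: the distance between the end tensor and
the end tensor obtained by pruning the `(ν,r)`'th local component is at most
`σ^(ν,r) · ∏_{ν' ∈ T \ ({ν} ∪ C(ν))} ‖W^(ν')‖`. -/
theorem statement14 {N : ℕ} (D : Fin N → ℕ) (T : MTree N) (hT : T.Valid)
    (R : MTree N → ℕ) (hR : ∀ i : Fin N, R (MTree.leaf i) = D i)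
    (W : ∀ ν : MTree N, Fin (R ν) → ℕ → ℝ)
    (ν : MTree N) (hν : ν ∈ T.nodes) (hint : ν.IsInterior) (r : Fin (R ν)) :
    tnorm D (fun x => endT D R W T x - endT D R (pruneLC R W ν (r : ℕ)) T x)
      ≤ sigmaLoc R W T ν (r : ℕ) *
        ((T.nodes.filter fun μ => ¬(μ = ν ∨ μ ∈ ν.children)).map fun μ =>
          wFro R W T μ).prod :=
  statement14_general D T hT R W ν hν r
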